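/- arXiv:2409.05719 — 2 statements merged into one kernel-verified Lean document; each statement's English description precedes it below -/
import Mathlib

section
/- Let M be a lattice of rank n, and let u_1, …, u_r be pairwise ℤ-linearly independent primitive elements of M. Then the elements 1 − e^{u_1}, …, 1 − e^{u_r} of the group algebra ℤ[M] are pairwise non-associate (in particular, for i ≠ j, 1 − e^{u_i} does not divide 1 − e^{u_j} when u_i and u_j are not proportional). -/
/-! A homomorphism `f : M →+ N` with `f u_i = 0` and `f u_j ≠ 0` induces a ring homomorphism
`ℤ[M] → ℤ[N]` killing `1 - e^{u_i}` but not `1 - e^{u_j}`, so the former cannot divide the latter.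
For independent `a, b ∈ ℤⁿ` such an `f` is a `2 × 2` minor `v ↦ a l * v k - a k * v l`: if all of
these vanished on `b`, then `b k • a - a k • b = 0` would be a nontrivial relation. -/

theorem LinearIndependent.exists_linearMap_eq_zero_ne_zero {R ι : Type*} [CommRing R] [Nontrivial R]
    {a b : ι → R} (h : LinearIndependent R ![a, b]) :
    ∃ f : (ι → R) →ₗ[R] R, f a = 0 ∧ f b ≠ 0 := by
  obtain ⟨k, hk⟩ : ∃ k, a k ≠ 0 := Function.ne_iff.mp (h.ne_zero 0)
  by_contra! hall
  have hminor : ∀ l, a l * b k - a k * b l = 0 := fun l => by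
    have hfa : (a l • LinearMap.proj k - a k • LinearMap.proj l : (ι → R) →ₗ[R] R) a = 0 := by
      simp [mul_comm]
    simpa using hall _ hfa
  have hrel : b k • a + (-a k) • b = 0 := funext fun l => by
    simp only [Pi.add_apply, Pi.smul_apply, smul_eq_mul, Pi.zero_apply]
    linear_combination hminor l
  exact hk (neg_eq_zero.mp (LinearIndependent.pair_iff.mp h _ _ hrel).2)

namespace AddMonoidAlgebra

variable {R M N : Type*} [Ring R] [AddMonoid M] [AddMonoid N]

theorem one_sub_single_one_eq_zero_iff [Nontrivial R] {a : M} :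
    (1 - single a (1 : R)) = 0 ↔ a = 0 := by
  rw [sub_eq_zero, one_def, single_left_inj one_ne_zero, eq_comm]

theorem mapDomainRingHom_one_sub_single (f : M →+ N) (a : M) :
    mapDomainRingHom R f (1 - single a 1) = 1 - single (f a) 1 := by
  rw [map_sub, map_one, mapDomainRingHom_apply, mapDomain_single]

theorem not_one_sub_single_dvd_of_map_eq_zero [Nontrivial R] (f : M →+ N) {a b : M}
    (ha : f a = 0) (hb : f b ≠ 0) : ¬ (1 - single a (1 : R)) ∣ (1 - single b 1) := by
  intro hdvd
  have hmap := map_dvd (mapDomainRingHom R f) hdvd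
  rw [mapDomainRingHom_one_sub_single, mapDomainRingHom_one_sub_single, ha, ← one_def, sub_self,
    zero_dvd_iff, one_sub_single_one_eq_zero_iff] at hmap
  exact hb hmap

end AddMonoidAlgebra

theorem stmt_11_general (n r : ℕ) (u : Fin r → (Fin n → ℤ))
    (hindep : ∀ i j : Fin r, i ≠ j → LinearIndependent ℤ ![u i, u j]) :
    ∀ i j : Fin r, i ≠ j →
      ¬ Associated
          (1 - AddMonoidAlgebra.single (u i) (1 : ℤ))
          (1 - AddMonoidAlgebra.single (u j) (1 : ℤ)) ∧
      ¬ ((1 - AddMonoidAlgebra.single (u i) (1 : ℤ)) ∣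
          (1 - AddMonoidAlgebra.single (u j) (1 : ℤ))) := by
  intro i j hij
  obtain ⟨f, hfi, hfj⟩ := (hindep i j hij).exists_linearMap_eq_zero_ne_zero
  have hndvd := AddMonoidAlgebra.not_one_sub_single_dvd_of_map_eq_zero (R := ℤ) f.toAddMonoidHom hfi hfj
  exact ⟨fun hassoc => hndvd hassoc.dvd, hndvd⟩

/-- In the Laurent polynomial ring `ℤ[ℤⁿ]` (the group algebra of the lattice
`M = ℤⁿ`), if `u_1, …, u_r` are pairwise `ℤ`-linearly independent primitive
vectors, then the elements `1 - e^{u_i}` are pairwise non-associate; in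
particular for `i ≠ j`, `1 - e^{u_i}` does not divide `1 - e^{u_j}`. -/
theorem stmt_11 (n r : ℕ) (u : Fin r → (Fin n → ℤ))
    (hprim : ∀ (i : Fin r) (c : ℤ) (v : Fin n → ℤ), u i = c • v → IsUnit c)
    (hindep : ∀ i j : Fin r, i ≠ j → LinearIndependent ℤ ![u i, u j]) :
    ∀ i j : Fin r, i ≠ j →
      ¬ Associated
          (1 - AddMonoidAlgebra.single (u i) (1 : ℤ))
          (1 - AddMonoidAlgebra.single (u j) (1 : ℤ)) ∧
      ¬ ((1 - AddMonoidAlgebra.single (u i) (1 : ℤ)) ∣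
          (1 - AddMonoidAlgebra.single (u j) (1 : ℤ))) :=
  stmt_11_general n r u hindep
end

section
/- Let P be a finite set of 'maximal cones' {σ_1, …, σ_m} with a distinguished subset assignment τ_i ⊆ σ_i (here cones are subsets of ℝⁿ) satisfying: τ_i ⊆ σ_j implies i ≤ j. Define Z_i = ∪_{j ≥ i} Y_j where Y_i = ∪_{τ_i ⊆ γ ⊆ σ_i} O_γ is the set of faces γ with τ_i ⊆ γ ⊆ σ_i (viewed as a set of cones of the fan). Then the sets of cones S_i = {γ : γ face of some σ_j with j ≥ i and τ_j ⊆ γ} form a decreasing chain S_1 ⊇ S_2 ⊇ ⋯ ⊇ S_m, S_i \ S_{i+1} = {γ : τ_i ⊆ γ ⊆ σ_i}, and every cone of the fan belongs to exactly one Y_i. -/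
/-- Combinatorial filtrability: given maximal cones `σ 1, …, σ m` of a fan `Δ`
(cones are subsets of `ℝⁿ`) with distinguished faces `τ i ⊆ σ i` satisfying
`τ i ⊆ σ j → i ≤ j`, and such that every cone of `Δ` lies in some
`Y i = {γ ∈ Δ | τ i ⊆ γ ⊆ σ i}`, the sets
`S i = {γ ∈ Δ | ∃ j, i ≤ j ≤ m, τ j ⊆ γ ⊆ σ j}` form a decreasing chain with
`S i \ S (i+1) = Y i`, and every cone of `Δ` belongs to exactly one `Y i`. -/
theorem stmt_15 (n m : ℕ) (Δ : Set (Set (Fin n → ℝ)))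
    (σ τ : ℕ → Set (Fin n → ℝ))
    (hmem : ∀ i, 1 ≤ i → i ≤ m → σ i ∈ Δ)
    (hface : ∀ i, 1 ≤ i → i ≤ m → τ i ⊆ σ i)
    (hstar : ∀ i j, 1 ≤ i → i ≤ m → 1 ≤ j → j ≤ m → τ i ⊆ σ j → i ≤ j)
    (hcover : ∀ γ ∈ Δ, ∃ i, 1 ≤ i ∧ i ≤ m ∧ τ i ⊆ γ ∧ γ ⊆ σ i) :
    (∀ i, {γ | γ ∈ Δ ∧ ∃ j, i + 1 ≤ j ∧ j ≤ m ∧ τ j ⊆ γ ∧ γ ⊆ σ j} ⊆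
          {γ | γ ∈ Δ ∧ ∃ j, i ≤ j ∧ j ≤ m ∧ τ j ⊆ γ ∧ γ ⊆ σ j}) ∧
    (∀ i, 1 ≤ i → i ≤ m →
      {γ | γ ∈ Δ ∧ ∃ j, i ≤ j ∧ j ≤ m ∧ τ j ⊆ γ ∧ γ ⊆ σ j} \
        {γ | γ ∈ Δ ∧ ∃ j, i + 1 ≤ j ∧ j ≤ m ∧ τ j ⊆ γ ∧ γ ⊆ σ j} =
      {γ | γ ∈ Δ ∧ τ i ⊆ γ ∧ γ ⊆ σ i}) ∧
    (∀ γ ∈ Δ, ∃! i, 1 ≤ i ∧ i ≤ m ∧ τ i ⊆ γ ∧ γ ⊆ σ i) := by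
  refine ⟨?_, ?_, ?_⟩
  · rintro i γ ⟨hγ, j, hj1, hj2, hj3, hj4⟩
    exact ⟨hγ, j, le_trans (Nat.le_succ i) hj1, hj2, hj3, hj4⟩
  · intro i hi1 hi2
    ext γ
    constructor
    · rintro ⟨⟨hγ, j, hj1, hj2, hj3, hj4⟩, hne⟩
      rcases eq_or_lt_of_le hj1 with rfl | hlt
      · exact ⟨hγ, hj3, hj4⟩
      · exact absurd ⟨hγ, j, hlt, hj2, hj3, hj4⟩ hne
    · rintro ⟨hγ, h1, h2⟩
      refine ⟨⟨hγ, i, le_refl i, hi2, h1, h2⟩, ?_⟩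
      rintro ⟨-, j, hj1, hj2, hj3, hj4⟩
      have := hstar j i (le_trans (le_trans hi1 (Nat.le_succ i)) hj1) hj2 hi1 hi2
        (hj3.trans h2)
      omega
  · intro γ hγ
    obtain ⟨i, hi1, hi2, hi3, hi4⟩ := hcover γ hγ
    refine ⟨i, ⟨hi1, hi2, hi3, hi4⟩, ?_⟩
    rintro j ⟨hj1, hj2, hj3, hj4⟩
    have h1 := hstar j i hj1 hj2 hi1 hi2 (hj3.trans hi4)
    have h2 := hstar i j hi1 hi2 hj1 hj2 (hi3.trans hj4)
    omega
end
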